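/- arXiv:1511.06198 — 4 statements merged into one kernel-verified Lean document; each statement's English description precedes it below -/
import Mathlib

section
/- For every integer n ≥ 2 and every real w with 0 < w ≤ 1, the incomplete beta integral satisfies ∫_w^1 s^{-1/2}(1-s)^{(n-3)/2} ds ≥ (2((n+2)w - 1)/(n^2-1)) · w^{-3/2}(1-w)^{(n-1)/2}. -/
/-!
Put `F(s) = 2((ν+2)s - 1)/(ν²-1) · s^{-3/2} (1-s)^{(ν-1)/2}`. Differentiating,
`F'(s) = 3/(ν²-1) · s^{-5/2} (1-s)^{(ν+1)/2} - s^{-1/2} (1-s)^{(ν-3)/2}`, whose first term is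
nonnegative on `[0, 1]` when `ν > 1`. As `F(1) = 0`, integrating `F'` over `[w, 1]` gives
`∫_w^1 s^{-1/2} (1-s)^{(ν-3)/2} ds = F(w) + ∫_w^1 3/(ν²-1) · s^{-5/2} (1-s)^{(ν+1)/2} ds`,
which is at least `F(w)`.
-/

open MeasureTheory Real Set

namespace BetaTail

noncomputable def betaKernel (ν s : ℝ) : ℝ := s ^ (-(1:ℝ)/2) * (1 - s) ^ ((ν - 3)/2)

noncomputable def tailMinorant (ν s : ℝ) : ℝ :=
  2 * ((ν + 2) * s - 1) / (ν ^ 2 - 1) * s ^ (-(3:ℝ)/2) * (1 - s) ^ ((ν - 1)/2)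

noncomputable def minorantDefect (ν s : ℝ) : ℝ :=
  3 / (ν ^ 2 - 1) * s ^ (-(5:ℝ)/2) * (1 - s) ^ ((ν + 1)/2)

variable {ν w x : ℝ}

theorem hasDerivAt_rpow_mul_one_sub_rpow (p q : ℝ) (hx0 : 0 < x) (hx1 : x < 1) :
    HasDerivAt (fun s => s ^ p * (1 - s) ^ q)
      (p * x ^ (p - 1) * (1 - x) ^ q - q * x ^ p * (1 - x) ^ (q - 1)) x := by
  have hleft := hasDerivAt_rpow_const (p := p) (Or.inl hx0.ne')
  have hright := (hasDerivAt_rpow_const (p := q) (Or.inl (sub_pos.2 hx1).ne')).comp x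
    ((hasDerivAt_id x).const_sub 1)
  refine (hleft.mul hright).congr_deriv ?_
  simp only [Function.comp_apply]
  ring

theorem hasDerivAt_tailMinorant (hν : ν ^ 2 ≠ 1) (hx0 : 0 < x) (hx1 : x < 1) :
    HasDerivAt (tailMinorant ν) (minorantDefect ν x - betaKernel ν x) x := by
  have hprod := hasDerivAt_rpow_mul_one_sub_rpow (-(3:ℝ)/2) ((ν - 1)/2) hx0 hx1
  have hlin : HasDerivAt (fun s => 2 * ((ν + 2) * s - 1) / (ν ^ 2 - 1))
      (2 * (ν + 2) / (ν ^ 2 - 1)) x := by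
    simpa using
      ((((hasDerivAt_id x).const_mul (ν + 2)).sub_const 1).const_mul 2).div_const (ν ^ 2 - 1)
  have hF : tailMinorant ν = fun s =>
      2 * ((ν + 2) * s - 1) / (ν ^ 2 - 1) * (s ^ (-(3:ℝ)/2) * (1 - s) ^ ((ν - 1)/2)) := by
    funext s; simp only [tailMinorant]; ring
  rw [hF]
  refine (hlin.mul hprod).congr_deriv ?_
  have h1x : (0:ℝ) < 1 - x := by linarith
  have e3 : x ^ (-(3:ℝ)/2) = x ^ (-(5:ℝ)/2) * x := by
    rw [show (-(3:ℝ)/2) = (-(5:ℝ)/2) + 1 by norm_num, rpow_add_one hx0.ne']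
  have e1 : x ^ (-(1:ℝ)/2) = x ^ (-(5:ℝ)/2) * x * x := by
    rw [show (-(1:ℝ)/2) = (-(5:ℝ)/2) + 1 + 1 by norm_num, rpow_add_one hx0.ne',
      rpow_add_one hx0.ne']
  have f1 : (1 - x) ^ ((ν - 1)/2) = (1 - x) ^ ((ν - 3)/2) * (1 - x) := by
    rw [show (ν - 1)/2 = (ν - 3)/2 + 1 by ring, rpow_add_one h1x.ne']
  have f2 : (1 - x) ^ ((ν + 1)/2) = (1 - x) ^ ((ν - 3)/2) * (1 - x) * (1 - x) := by
    rw [show (ν + 1)/2 = (ν - 3)/2 + 1 + 1 by ring, rpow_add_one h1x.ne', rpow_add_one h1x.ne']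
  have hν' : ν ^ 2 - 1 ≠ 0 := sub_ne_zero.2 hν
  simp only [minorantDefect, betaKernel]
  rw [show -(3:ℝ)/2 - 1 = -(5:ℝ)/2 by norm_num, show (ν - 1)/2 - 1 = (ν - 3)/2 by ring,
    e3, e1, f1, f2]
  field_simp
  ring

theorem tailMinorant_one (hν : ν ≠ 1) : tailMinorant ν 1 = 0 := by
  have hq : (ν - 1) / 2 ≠ 0 := by intro h; apply hν; linarith
  simp [tailMinorant, zero_rpow hq]

theorem continuousOn_tailMinorant (hν : 1 ≤ ν) (hw : 0 < w) :
    ContinuousOn (tailMinorant ν) (Icc w 1) := by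
  refine ContinuousOn.mul (ContinuousOn.mul (by fun_prop) ?_) ?_
  · exact ContinuousOn.rpow_const continuousOn_id fun s hs => Or.inl (hw.trans_le hs.1).ne'
  · exact ContinuousOn.rpow_const (by fun_prop) fun _ _ => Or.inr (by linarith)

theorem minorantDefect_nonneg {s : ℝ} (hν : 1 ≤ ν ^ 2) (hs0 : 0 ≤ s) (hs1 : s ≤ 1) :
    0 ≤ minorantDefect ν s := by
  have : 0 ≤ 1 - s := by linarith
  unfold minorantDefect
  have : 0 ≤ ν ^ 2 - 1 := by linarith
  positivity

theorem intervalIntegrable_minorantDefect (hν : -1 ≤ ν) (hw : 0 < w) :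
    IntervalIntegrable (minorantDefect ν) volume w 1 := by
  refine ContinuousOn.intervalIntegrable (ContinuousOn.mul (ContinuousOn.mul (by fun_prop) ?_) ?_)
  · exact ContinuousOn.rpow_const continuousOn_id
      fun s hs => Or.inl ((lt_min hw one_pos).trans_le hs.1).ne'
  · exact ContinuousOn.rpow_const (by fun_prop) fun _ _ => Or.inr (by linarith)

theorem intervalIntegrable_betaKernel (hν : 1 < ν) (hw : 0 < w) :
    IntervalIntegrable (betaKernel ν) volume w 1 := by
  have hright : IntervalIntegrable (fun s : ℝ => (1 - s) ^ ((ν - 3)/2)) volume w 1 := by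
    simpa using (intervalIntegral.intervalIntegrable_rpow' (r := (ν - 3)/2)
      (a := 1 - w) (b := 1 - 1) (by linarith)).comp_sub_left 1
  refine hright.continuousOn_mul (ContinuousOn.rpow_const continuousOn_id ?_)
  exact fun s hs => Or.inl ((lt_min hw one_pos).trans_le hs.1).ne'

theorem tailMinorant_le_integral_betaKernel (hν : 1 < ν) (hw0 : 0 < w) (hw1 : w ≤ 1) :
    tailMinorant ν w ≤ ∫ s in w..1, betaKernel ν s := by
  have hν2 : 1 < ν ^ 2 := by nlinarith
  have hdefect := intervalIntegrable_minorantDefect (ν := ν) (by linarith) hw0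
  have hkernel := intervalIntegrable_betaKernel hν hw0
  have hftc : ∫ s in w..1, (minorantDefect ν s - betaKernel ν s) = - tailMinorant ν w := by
    rw [intervalIntegral.integral_eq_sub_of_hasDeriv_right_of_le hw1
      (continuousOn_tailMinorant hν.le hw0)
      (fun x hx => (hasDerivAt_tailMinorant hν2.ne' (hw0.trans hx.1) hx.2).hasDerivWithinAt)
      (hdefect.sub hkernel), tailMinorant_one hν.ne', zero_sub]
  have hdefect_nonneg : 0 ≤ ∫ s in w..1, minorantDefect ν s :=
    intervalIntegral.integral_nonneg hw1 fun s hs =>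
      minorantDefect_nonneg hν2.le (hw0.le.trans hs.1) hs.2
  rw [intervalIntegral.integral_sub hdefect hkernel] at hftc
  linarith

end BetaTail

theorem beta_tail_lower (n : ℕ) (hn : 2 ≤ n) (w : ℝ) (hw0 : 0 < w) (hw1 : w ≤ 1) :
    2 * (((n:ℝ) + 2) * w - 1) / ((n:ℝ)^2 - 1) * w ^ (-(3:ℝ)/2) * (1 - w) ^ (((n:ℝ) - 1)/2)
      ≤ ∫ s in Ioc w 1, s ^ (-(1:ℝ)/2) * (1 - s) ^ (((n:ℝ) - 3)/2) := by
  have hn1 : (1:ℝ) < n := by exact_mod_cast hn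
  rw [← intervalIntegral.integral_of_le hw1]
  exact BetaTail.tailMinorant_le_integral_betaKernel hn1 hw0 hw1
end

section
/- Let n ≥ 2 and let U be uniformly distributed on the unit sphere S^{n-1} ⊂ ℝ^n. Then for any fixed unit vector L ∈ ℝ^n, the random variable ⟨L, U⟩² has the Beta(1/2, (n-1)/2) distribution. -/
open MeasureTheory ProbabilityTheory Real Set

/-- The uniform (normalized surface) probability measure on the unit sphere of `ℝ^n`,
viewed as a measure on the ambient space `EuclideanSpace ℝ (Fin n)`. -/
noncomputable def sphereUniform (n : ℕ) : Measure (EuclideanSpace ℝ (Fin n)) :=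
  (((volume : Measure (EuclideanSpace ℝ (Fin n))).toSphere) Set.univ)⁻¹ •
    (Measure.map Subtype.val ((volume : Measure (EuclideanSpace ℝ (Fin n))).toSphere))

/-- The real Beta function. -/
noncomputable def betaFun (a b : ℝ) : ℝ := Real.Gamma a * Real.Gamma b / Real.Gamma (a + b)

/-- The Beta(a,b) distribution on ℝ. -/
noncomputable def betaMeasure (a b : ℝ) : Measure ℝ :=
  ((volume : Measure ℝ).restrict (Set.Ioo 0 1)).withDensity
    fun x => ENNReal.ofReal (x ^ (a - 1) * (1 - x) ^ (b - 1) / betaFun a b)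

/-
By the definition of `Measure.toSphere`, the surface measure of a set `A` of directions is, up to
the factor `n`, the volume of the truncated cone `(0, 1) • A`; so the law of `⟨L, u⟩²` on the sphere
is that of `⟨L, x⟩² / ‖x‖²` for `x` in the unit ball. Rotating `L` to the first axis and writing
`x = (a, z) ∈ ℝ × ℝ^(n-1)`, integrating out the direction of `z` leaves the weight `r^(n-2)` on the
half-plane `{(a, r) | r > 0}`. In polar coordinates `(a, r) = (ρ cos θ, ρ sin θ)` the ratio becomes
`cos² θ` and the weight splits as `ρ^(n-1) sin^(n-2) θ`; the substitution `x = cos² θ` turns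
`sin^(n-2) θ dθ` into `x^(-1/2) (1 - x)^((n-3)/2) dx`. The law is therefore proportional to
Beta(1/2, (n-1)/2), and two proportional probability measures are equal.
-/

open scoped ENNReal

noncomputable def unnormalizedBetaMeasure (a b : ℝ) : Measure ℝ :=
  ((volume : Measure ℝ).restrict (Ioo 0 1)).withDensity
    fun x => ENNReal.ofReal (x ^ (a - 1) * (1 - x) ^ (b - 1))

section Beta

variable {a b : ℝ}

lemma betaMeasure_eq_probabilityTheory_betaMeasure :
    _root_.betaMeasure a b = ProbabilityTheory.betaMeasure a b := by
  rw [_root_.betaMeasure, ProbabilityTheory.betaMeasure, ← withDensity_indicator measurableSet_Ioo]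
  congr 1
  funext x
  by_cases hx : x ∈ Ioo 0 1
  · rw [indicator_of_mem hx, ProbabilityTheory.betaPDF_of_pos_lt_one hx.1 hx.2, betaFun,
      ProbabilityTheory.beta]
    ring_nf
  · rw [indicator_of_notMem hx, ProbabilityTheory.betaPDF_eq,
      if_neg (show ¬(0 < x ∧ x < 1) from hx), ENNReal.ofReal_zero]

lemma isProbabilityMeasure_betaMeasure (ha : 0 < a) (hb : 0 < b) :
    IsProbabilityMeasure (_root_.betaMeasure a b) :=
  betaMeasure_eq_probabilityTheory_betaMeasure ▸ ProbabilityTheory.isProbabilityMeasureBeta ha hb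

lemma betaMeasure_eq_smul (ha : 0 < a) (hb : 0 < b) :
    _root_.betaMeasure a b = (ENNReal.ofReal (betaFun a b))⁻¹ • unnormalizedBetaMeasure a b := by
  rw [_root_.betaMeasure, unnormalizedBetaMeasure, ← withDensity_smul _ (by fun_prop)]
  congr 1
  funext x
  rw [Pi.smul_apply, smul_eq_mul, ENNReal.ofReal_div_of_pos
    (show 0 < betaFun a b from ProbabilityTheory.beta_pos ha hb),
    div_eq_mul_inv, mul_comm]

end Beta

lemma MeasureTheory.Measure.eq_of_isProbabilityMeasure_of_eq_smul {α : Type*} [MeasurableSpace α]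
    {μ μ' ν : Measure α} {c c' : ℝ≥0∞} [IsProbabilityMeasure μ] [IsProbabilityMeasure μ']
    (h : μ = c • ν) (h' : μ' = c' • ν) : μ = μ' := by
  have hc : c * ν univ = 1 := by rw [← smul_eq_mul, ← Measure.smul_apply, ← h, measure_univ]
  have hc' : c' * ν univ = 1 := by rw [← smul_eq_mul, ← Measure.smul_apply, ← h', measure_univ]
  rw [h, h', ENNReal.eq_inv_of_mul_eq_one_left hc, ENNReal.eq_inv_of_mul_eq_one_left hc']

section Polar

variable {E : Type*} [NormedAddCommGroup E] [NormedSpace ℝ E] [MeasurableSpace E] [BorelSpace E]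
  (μ : Measure E)

lemma MeasureTheory.Measure.toSphere_preimage_val {A : Set E} (hA : MeasurableSet A) :
    μ.toSphere (Subtype.val ⁻¹' A)
      = Module.finrank ℝ E * μ {x | x ≠ 0 ∧ ‖x‖ < 1 ∧ ‖x‖⁻¹ • x ∈ A} := by
  rw [μ.toSphere_apply' (measurable_subtype_coe hA), Subtype.image_preimage_coe]
  congr 2
  ext x
  simp only [mem_smul, mem_inter_iff, mem_sphere_zero_iff_norm, mem_Ioo, mem_ofPred_eq]
  constructor
  · rintro ⟨t, ⟨ht0, ht1⟩, y, ⟨hy, hyA⟩, rfl⟩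
    have hnorm : ‖t • y‖ = t := by rw [norm_smul, hy, mul_one, Real.norm_of_nonneg ht0.le]
    refine ⟨smul_ne_zero ht0.ne' (norm_ne_zero_iff.1 (hy.symm ▸ one_ne_zero)), by rwa [hnorm], ?_⟩
    rwa [hnorm, inv_smul_smul₀ ht0.ne']
  · rintro ⟨hx, hx1, hxA⟩
    refine ⟨‖x‖, ⟨norm_pos_iff.2 hx, hx1⟩, ‖x‖⁻¹ • x, ⟨?_, hxA⟩,
      smul_inv_smul₀ (norm_ne_zero_iff.2 hx) x⟩
    rw [norm_smul, norm_inv, norm_norm, inv_mul_cancel₀ (norm_ne_zero_iff.2 hx)]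

variable [FiniteDimensional ℝ E] [Nontrivial E] [μ.IsAddHaarMeasure]

lemma lintegral_fun_norm_addHaar {f : ℝ → ℝ≥0∞} (hf : Measurable f) :
    ∫⁻ x, f ‖x‖ ∂μ = μ.toSphere univ
      * ∫⁻ r in Ioi 0, ENNReal.ofReal (r ^ (Module.finrank ℝ E - 1)) * f r := by
  calc ∫⁻ x, f ‖x‖ ∂μ = ∫⁻ x : ({0}ᶜ : Set E), f ‖x.1‖ ∂(μ.comap (↑)) := by
        rw [lintegral_subtype_comap (measurableSet_singleton _).compl (fun x => f ‖x‖),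
          restrict_compl_singleton]
    _ = ∫⁻ x, f x.2 ∂(μ.toSphere.prod (Measure.volumeIoiPow (Module.finrank ℝ E - 1))) := by
        simpa using μ.measurePreserving_homeomorphUnitSphereProd.lintegral_comp_emb
          (Homeomorph.measurableEmbedding _) (f ∘ Subtype.val ∘ Prod.snd)
    _ = μ.toSphere univ * ∫⁻ r, f r ∂(Measure.volumeIoiPow (Module.finrank ℝ E - 1)) := by
        simpa using lintegral_prod_mul (μ := μ.toSphere) (f := fun _ => 1)
          (g := fun r : Ioi (0 : ℝ) => f r) aemeasurable_const
          (hf.comp measurable_subtype_coe).aemeasurable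
    _ = _ := by
        rw [Measure.volumeIoiPow, lintegral_withDensity_eq_lintegral_mul _
          (f := fun r : Ioi (0 : ℝ) => ENNReal.ofReal (r.1 ^ (Module.finrank ℝ E - 1)))
          (by fun_prop) (g := fun r : Ioi (0 : ℝ) => f r) (hf.comp measurable_subtype_coe)]
        exact congrArg _ (lintegral_subtype_comap measurableSet_Ioi
          fun r => ENNReal.ofReal (r ^ (Module.finrank ℝ E - 1)) * f r)

lemma prod_setOf_fst_norm_snd_mem {α : Type*} [MeasurableSpace α] (ν : Measure α) [SFinite ν]
    {T : Set (α × ℝ)} (hT : MeasurableSet T) :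
    (ν.prod μ) {p | (p.1, ‖p.2‖) ∈ T} = μ.toSphere univ
      * ∫⁻ q in T, ENNReal.ofReal (q.2 ^ (Module.finrank ℝ E - 1))
          ∂(ν.prod (volume.restrict (Ioi 0))) := by
  have hweight : Measurable fun q : α × ℝ =>
      T.indicator (fun q => ENNReal.ofReal (q.2 ^ (Module.finrank ℝ E - 1))) q := by
    exact (Measurable.ennreal_ofReal (by fun_prop)).indicator hT
  change (ν.prod μ) ((fun p => (p.1, ‖p.2‖)) ⁻¹' T) = _
  rw [Measure.prod_apply (hT.preimage (by fun_prop)), ← lintegral_indicator hT,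
    lintegral_prod _ hweight.aemeasurable, ← lintegral_const_mul _ ?_]
  · refine lintegral_congr fun a => ?_
    have hslice : MeasurableSet (Prod.mk a ⁻¹' T) := hT.preimage measurable_prodMk_left
    have hnorm : μ (norm ⁻¹' (Prod.mk a ⁻¹' T)) = ∫⁻ z, (Prod.mk a ⁻¹' T).indicator 1 ‖z‖ ∂μ :=
      (lintegral_indicator_one (hslice.preimage measurable_norm)).symm
    change μ (norm ⁻¹' (Prod.mk a ⁻¹' T)) = _
    rw [hnorm,
      lintegral_fun_norm_addHaar μ (f := (Prod.mk a ⁻¹' T).indicator 1)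
        (measurable_const.indicator hslice)]
    refine congrArg _ (lintegral_congr fun r => ?_)
    by_cases h : (a, r) ∈ T
    · rw [indicator_of_mem h, indicator_of_mem (show r ∈ Prod.mk a ⁻¹' T from h), Pi.one_apply,
        mul_one]
    · rw [indicator_of_notMem h, indicator_of_notMem (show r ∉ Prod.mk a ⁻¹' T from h), mul_zero]
  · exact hweight.lintegral_prod_right'

end Polar

lemma isProbabilityMeasure_sphereUniform (n : ℕ) [NeZero n] :
    IsProbabilityMeasure (sphereUniform n) := by
  constructor
  rw [sphereUniform, Measure.smul_apply,
    Measure.map_apply measurable_subtype_coe MeasurableSet.univ,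
    preimage_univ, smul_eq_mul, ENNReal.inv_mul_cancel
      (Measure.measure_univ_ne_zero.2 (Measure.toSphere_ne_zero _)) (measure_ne_top _ _)]

section Euclidean

variable {n : ℕ}

lemma EuclideanSpace.measurePreserving_head_tail :
    MeasurePreserving (fun y : EuclideanSpace ℝ (Fin (n + 1)) =>
      (y 0, WithLp.toLp 2 fun j : Fin n => y j.succ)) := by
  have hsplit := (measurePreserving_piFinSuccAbove (fun _ : Fin (n + 1) => (volume : Measure ℝ)) 0)
  exact ((MeasurePreserving.id volume).prod
    (EuclideanSpace.volume_preserving_symm_measurableEquiv_toLp (Fin n)).symm).comp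
      (hsplit.comp (EuclideanSpace.volume_preserving_symm_measurableEquiv_toLp (Fin (n + 1))))

lemma EuclideanSpace.norm_sq_eq_head_sq_add_tail (y : EuclideanSpace ℝ (Fin (n + 1))) :
    ‖y‖ ^ 2
      = y 0 ^ 2 + ‖(WithLp.toLp 2 fun j : Fin n => y j.succ : EuclideanSpace ℝ (Fin n))‖ ^ 2 := by
  simp only [EuclideanSpace.norm_sq_eq, Real.norm_eq_abs, sq_abs, Fin.sum_univ_succ]

lemma exists_measurePreserving_inner_prod {L : EuclideanSpace ℝ (Fin (n + 1))} (hL : ‖L‖ = 1) :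
    ∃ e : EuclideanSpace ℝ (Fin (n + 1)) → ℝ × EuclideanSpace ℝ (Fin n), MeasurePreserving e ∧
      ∀ x, (e x).1 = inner ℝ L x ∧ ‖x‖ ^ 2 = (e x).1 ^ 2 + ‖(e x).2‖ ^ 2 := by
  have hortho : Orthonormal ℝ (({0} : Set (Fin (n + 1))).domRestrict fun _ => L) :=
    ⟨fun _ => hL, fun i j hij => absurd (Subsingleton.elim i j) hij⟩
  obtain ⟨b, hb⟩ := hortho.exists_orthonormalBasis_extension_of_card_eq (by simp)
  refine ⟨_, EuclideanSpace.measurePreserving_head_tail.comp b.measurePreserving_repr,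
    fun x => ⟨?_, ?_⟩⟩
  · simp [b.repr_apply_apply, hb 0 rfl]
  · rw [← b.repr.norm_map]
    exact EuclideanSpace.norm_sq_eq_head_sq_add_tail _

lemma volume_setOf_inner_normSq_mem {L : EuclideanSpace ℝ (Fin (n + 1))} (hL : ‖L‖ = 1)
    {T : Set (ℝ × ℝ)} (hT : MeasurableSet T) :
    volume {x : EuclideanSpace ℝ (Fin (n + 1)) | (inner ℝ L x, ‖x‖ ^ 2) ∈ T}
      = volume {p : ℝ × EuclideanSpace ℝ (Fin n) | (p.1, p.1 ^ 2 + ‖p.2‖ ^ 2) ∈ T} := by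
  obtain ⟨e, he, hex⟩ := exists_measurePreserving_inner_prod hL
  have hpre : {x | (inner ℝ L x, ‖x‖ ^ 2) ∈ T} = e ⁻¹' {p | (p.1, p.1 ^ 2 + ‖p.2‖ ^ 2) ∈ T} := by
    ext x
    rw [mem_preimage, mem_ofPred_eq, mem_ofPred_eq, ← (hex x).1, ← (hex x).2]
  rw [hpre]
  exact he.measure_preimage (hT.preimage (by fun_prop)).nullMeasurableSet

end Euclidean

lemma lintegral_prod_restrict_Ioi_eq_polarCoord (g : ℝ × ℝ → ℝ≥0∞) :
    ∫⁻ q, g q ∂(volume.prod (volume.restrict (Ioi 0)))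
      = ∫⁻ p in Ioi 0 ×ˢ Ioo 0 π, ENNReal.ofReal p.1 * g (polarCoord.symm p) := by
  have hbox : Ioi 0 ×ˢ Ioo 0 π ⊆ polarCoord.target := by
    rw [polarCoord_target]
    exact prod_mono_right (Ioo_subset_Ioo_left (by linarith [pi_pos]))
  have hmem : ∀ p ∈ polarCoord.target,
      polarCoord.symm p ∈ univ ×ˢ Ioi 0 ↔ p ∈ Ioi 0 ×ˢ Ioo 0 π := by
    rintro ⟨ρ, θ⟩ ⟨hρ, hθ⟩
    simp only [polarCoord_symm_apply, mem_prod, mem_univ, mem_Ioi, true_and, mem_Ioo] at hρ hθ ⊢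
    rw [mul_pos_iff_of_pos_left hρ]
    refine ⟨fun hsin => ⟨hρ, ?_, hθ.2⟩, fun h => sin_pos_of_pos_of_lt_pi h.2.1 h.2.2⟩
    by_contra! h
    linarith [sin_nonpos_of_nonpos_of_neg_pi_le h hθ.1.le]
  have hhalf : (volume : Measure ℝ).prod (volume.restrict (Ioi (0 : ℝ)))
      = volume.restrict (univ ×ˢ Ioi 0) := by
    rw [Measure.volume_eq_prod, ← Measure.prod_restrict, Measure.restrict_univ]
  rw [hhalf,
    ← lintegral_indicator (MeasurableSet.univ.prod measurableSet_Ioi),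
    ← lintegral_comp_polarCoord_symm, ← inter_eq_left.2 hbox, ← Measure.restrict_restrict
      (measurableSet_Ioi.prod measurableSet_Ioo), ← lintegral_indicator
      (measurableSet_Ioi.prod measurableSet_Ioo)]
  refine setLIntegral_congr_fun polarCoord.open_target.measurableSet fun p hp => ?_
  by_cases h : p ∈ Ioi 0 ×ˢ Ioo 0 π
  · rw [indicator_of_mem ((hmem p hp).2 h), indicator_of_mem h, smul_eq_mul]
  · rw [indicator_of_notMem (mt (hmem p hp).1 h), indicator_of_notMem h, smul_zero]

lemma setLIntegral_unitDisc_pow_eq_mul (m : ℕ) {s : Set ℝ} (hs : MeasurableSet s) :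
    ∫⁻ q in {q : ℝ × ℝ | 0 < q.1 ^ 2 + q.2 ^ 2 ∧ q.1 ^ 2 + q.2 ^ 2 < 1 ∧
        q.1 ^ 2 / (q.1 ^ 2 + q.2 ^ 2) ∈ s}, ENNReal.ofReal (q.2 ^ m)
          ∂(volume.prod (volume.restrict (Ioi 0)))
      = (∫⁻ ρ in Ioo 0 1, ENNReal.ofReal (ρ ^ (m + 1)))
          * ∫⁻ θ in Ioo 0 π, s.indicator 1 (cos θ ^ 2) * ENNReal.ofReal (sin θ ^ m) := by
  set D := {q : ℝ × ℝ | 0 < q.1 ^ 2 + q.2 ^ 2 ∧ q.1 ^ 2 + q.2 ^ 2 < 1 ∧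
    q.1 ^ 2 / (q.1 ^ 2 + q.2 ^ 2) ∈ s}
  have hD : MeasurableSet D := by
    have hr : Measurable fun q : ℝ × ℝ => q.1 ^ 2 + q.2 ^ 2 := by fun_prop
    exact (measurableSet_lt measurable_const hr).inter ((measurableSet_lt hr measurable_const).inter
      (((measurable_fst.pow_const 2).div hr) hs))
  have hpolar : ∀ p ∈ Ioi 0 ×ˢ Ioo 0 π,
      ENNReal.ofReal p.1 * D.indicator (fun q => ENNReal.ofReal (q.2 ^ m)) (polarCoord.symm p)
        = (Iio 1).indicator (fun ρ => ENNReal.ofReal (ρ ^ (m + 1))) p.1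
          * (s.indicator 1 (cos p.2 ^ 2) * ENNReal.ofReal (sin p.2 ^ m)) := by
    rintro ⟨ρ, θ⟩ ⟨hρ : 0 < ρ, hθ⟩
    have hnorm : (ρ * cos θ) ^ 2 + (ρ * sin θ) ^ 2 = ρ ^ 2 := by
      linear_combination ρ ^ 2 * cos_sq_add_sin_sq θ
    have hmem : (ρ * cos θ, ρ * sin θ) ∈ D ↔ ρ < 1 ∧ cos θ ^ 2 ∈ s := by
      change 0 < _ ∧ _ < 1 ∧ _ / _ ∈ s ↔ _
      rw [hnorm, mul_pow, mul_div_cancel_left₀ _ (pow_pos hρ 2).ne',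
        pow_lt_one_iff_of_nonneg hρ.le two_ne_zero]
      exact and_iff_right (pow_pos hρ 2)
    rw [polarCoord_symm_apply]
    by_cases h1 : ρ < 1 <;> by_cases h2 : cos θ ^ 2 ∈ s
    · rw [indicator_of_mem (hmem.2 ⟨h1, h2⟩), indicator_of_mem (mem_Iio.2 h1),
        indicator_of_mem h2, Pi.one_apply, one_mul, ← ENNReal.ofReal_mul hρ.le,
        ← ENNReal.ofReal_mul (pow_nonneg hρ.le _)]
      ring_nf
    all_goals simp [indicator_of_notMem, hmem, h1, h2]
  rw [← lintegral_indicator hD, lintegral_prod_restrict_Ioi_eq_polarCoord,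
    setLIntegral_congr_fun (measurableSet_Ioi.prod measurableSet_Ioo) hpolar,
    Measure.volume_eq_prod, ← Measure.prod_restrict, lintegral_prod_mul
      (f := (Iio 1).indicator fun ρ => ENNReal.ofReal (ρ ^ (m + 1)))
      (g := fun θ => s.indicator 1 (cos θ ^ 2) * ENNReal.ofReal (sin θ ^ m))
      ((by fun_prop : Measurable fun ρ : ℝ => ENNReal.ofReal (ρ ^ (m + 1))).indicator
        measurableSet_Iio).aemeasurable
      (((measurable_const.indicator hs).comp (by fun_prop)).mul (by fun_prop)).aemeasurable,
    lintegral_indicator measurableSet_Iio, Measure.restrict_restrict measurableSet_Iio,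
    Iio_inter_Ioi]

lemma StrictAntiOn.image_Ioo_of_continuousOn {f : ℝ → ℝ} {a b : ℝ} (hab : a ≤ b)
    (hf : StrictAntiOn f (Icc a b)) (hc : ContinuousOn f (Icc a b)) :
    f '' Ioo a b = Ioo (f b) (f a) :=
  (hf.image_Ioo_subset).antisymm (intermediate_value_Ioo' hab hc)

lemma setLIntegral_Ioo_eq_two_mul_of_symm {f : ℝ → ℝ≥0∞} {c : ℝ} (hc : 0 < c)
    (hf : ∀ x, f (c - x) = f x) :
    ∫⁻ x in Ioo 0 c, f x = 2 * ∫⁻ x in Ioo 0 (c / 2), f x := by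
  have hreflect : ∫⁻ x in Ioo (c / 2) c, f x = ∫⁻ x in Ioo 0 (c / 2), f x := by
    have himage : (fun x => c - x) '' Ioo 0 (c / 2) = Ioo (c / 2) c := by
      rw [image_const_sub_Ioo, sub_zero, sub_half]
    rw [← himage, lintegral_image_eq_lintegral_abs_deriv_mul measurableSet_Ioo
      (f := fun x => c - x) (fun x _ => ((hasDerivAt_id' x).const_sub c).hasDerivWithinAt)
      sub_right_injective.injOn]
    simp [hf]
  rw [← Ioc_union_Ioo_eq_Ioo (half_pos hc).le (half_lt_self hc),
    lintegral_union measurableSet_Ioo (Ioc_disjoint_Ioi_same.mono_right Ioo_subset_Ioi_self),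
    hreflect, Measure.restrict_congr_set Ioo_ae_eq_Ioc, two_mul]

lemma strictAntiOn_cos_sq : StrictAntiOn (fun θ => cos θ ^ 2) (Icc 0 (π / 2)) :=
  fun x hx y hy hxy => pow_lt_pow_left₀
    (strictAntiOn_cos ⟨hx.1, by linarith [hx.2, pi_pos]⟩ ⟨hy.1, by linarith [hy.2, pi_pos]⟩ hxy)
    (cos_nonneg_of_mem_Icc ⟨by linarith [hy.1, pi_pos], hy.2⟩) two_ne_zero

lemma image_cos_sq_Ioo : (fun θ => cos θ ^ 2) '' Ioo 0 (π / 2) = Ioo 0 1 := by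
  rw [strictAntiOn_cos_sq.image_Ioo_of_continuousOn (by positivity) (by fun_prop)]
  simp

lemma abs_two_mul_cos_mul_sin_mul_rpow_cos_sq (m : ℕ) {θ : ℝ} (hθ : θ ∈ Ioo 0 (π / 2)) :
    |2 * cos θ * sin θ| * ((cos θ ^ 2) ^ ((1:ℝ) / 2 - 1) * (1 - cos θ ^ 2) ^ (((m:ℝ) + 1) / 2 - 1))
      = 2 * sin θ ^ m := by
  have hc : 0 < cos θ := cos_pos_of_mem_Ioo ⟨by linarith [hθ.1, pi_pos], hθ.2⟩
  have hs : 0 < sin θ := sin_pos_of_pos_of_lt_pi hθ.1 (by linarith [hθ.2, pi_pos])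
  have hsq (x y : ℝ) (hx : 0 < x) : (x ^ 2) ^ y = x ^ (2 * y) := by
    rw [← rpow_natCast, ← rpow_mul hx.le, Nat.cast_ofNat]
  rw [← sin_sq, hsq _ _ hc, hsq _ _ hs, abs_of_pos (by positivity)]
  calc 2 * cos θ * sin θ * (cos θ ^ (2 * ((1:ℝ) / 2 - 1)) * sin θ ^ (2 * (((m:ℝ) + 1) / 2 - 1)))
      = 2 * (cos θ ^ (1 + 2 * ((1:ℝ) / 2 - 1)) * sin θ ^ (1 + 2 * (((m:ℝ) + 1) / 2 - 1))) := by
        rw [rpow_add hc, rpow_add hs, rpow_one, rpow_one]; ring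
    _ = 2 * sin θ ^ m := by
        rw [show 1 + 2 * ((1:ℝ) / 2 - 1) = 0 by ring,
          show 1 + 2 * (((m:ℝ) + 1) / 2 - 1) = m by ring,
          rpow_zero, rpow_natCast, one_mul]

lemma setLIntegral_indicator_cos_sq_mul_sin_pow (m : ℕ) {s : Set ℝ} (hs : MeasurableSet s) :
    ∫⁻ θ in Ioo 0 π, s.indicator 1 (cos θ ^ 2) * ENNReal.ofReal (sin θ ^ m)
      = unnormalizedBetaMeasure (1 / 2) (((m:ℝ) + 1) / 2) s := by
  have hderiv : ∀ θ ∈ Ioo 0 (π / 2),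
      HasDerivWithinAt (fun θ => cos θ ^ 2) (-(2 * cos θ * sin θ)) (Ioo 0 (π / 2)) θ :=
    fun θ _ => ((hasDerivAt_cos θ).pow 2).hasDerivWithinAt.congr_deriv (by ring)
  rw [unnormalizedBetaMeasure, withDensity_apply _ hs, ← lintegral_indicator hs,
    ← image_cos_sq_Ioo, lintegral_image_eq_lintegral_abs_deriv_mul measurableSet_Ioo hderiv
      (strictAntiOn_cos_sq.injOn.mono Ioo_subset_Icc_self),
    setLIntegral_Ioo_eq_two_mul_of_symm pi_pos (fun θ => by rw [cos_pi_sub, sin_pi_sub, neg_sq]),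
    ← lintegral_const_mul' _ _ ENNReal.ofNat_ne_top]
  refine setLIntegral_congr_fun measurableSet_Ioo fun θ hθ => ?_
  by_cases hθs : cos θ ^ 2 ∈ s
  · rw [indicator_of_mem hθs, indicator_of_mem hθs, Pi.one_apply, one_mul,
      ← ENNReal.ofReal_mul (abs_nonneg _), abs_neg,
      abs_two_mul_cos_mul_sin_mul_rpow_cos_sq m hθ, ENNReal.ofReal_mul zero_le_two,
      ENNReal.ofReal_ofNat]
  · simp [indicator_of_notMem hθs]

lemma map_inner_sq_toSphere_eq_smul {m : ℕ} {L : EuclideanSpace ℝ (Fin (m + 2))} (hL : ‖L‖ = 1) :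
    ∃ c : ℝ≥0∞, (volume : Measure (EuclideanSpace ℝ (Fin (m + 2)))).toSphere.map
        (fun u => inner ℝ L u.1 ^ 2) = c • unnormalizedBetaMeasure (1 / 2) (((m : ℝ) + 1) / 2) := by
  refine ⟨(m + 2 : ℕ) * ((volume : Measure (EuclideanSpace ℝ (Fin (m + 1)))).toSphere univ
    * ∫⁻ ρ in Ioo 0 1, ENNReal.ofReal (ρ ^ (m + 1))), Measure.ext fun s hs => ?_⟩
  set T := {q : ℝ × ℝ | 0 < q.2 ∧ q.2 < 1 ∧ q.1 ^ 2 / q.2 ∈ s}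
  have hT : MeasurableSet T := by
    refine (measurableSet_lt measurable_const measurable_snd).inter
      ((measurableSet_lt measurable_snd measurable_const).inter ?_)
    exact ((measurable_fst.pow_const 2).div measurable_snd) hs
  have hcone : {x : EuclideanSpace ℝ (Fin (m + 2)) | x ≠ 0 ∧ ‖x‖ < 1 ∧
      ‖x‖⁻¹ • x ∈ {y | inner ℝ L y ^ 2 ∈ s}} = {x | (inner ℝ L x, ‖x‖ ^ 2) ∈ T} := by
    ext x
    simp only [mem_ofPred_eq, real_inner_smul_right, ← div_eq_inv_mul]
    change _ ↔ 0 < ‖x‖ ^ 2 ∧ ‖x‖ ^ 2 < 1 ∧ inner ℝ L x ^ 2 / ‖x‖ ^ 2 ∈ s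
    rw [← norm_ne_zero_iff, ← sq_pos_iff, div_pow, sq_lt_one_iff₀ (norm_nonneg x)]
  rw [Measure.map_apply (by fun_prop) hs, Measure.smul_apply, smul_eq_mul,
    ← setLIntegral_indicator_cos_sq_mul_sin_pow m hs, mul_assoc, mul_assoc,
    ← setLIntegral_unitDisc_pow_eq_mul m hs]
  calc _ = ((m + 2 : ℕ) : ℝ≥0∞) * volume {x : EuclideanSpace ℝ (Fin (m + 2)) | x ≠ 0 ∧ ‖x‖ < 1 ∧
        ‖x‖⁻¹ • x ∈ {y | inner ℝ L y ^ 2 ∈ s}} := by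
        have h := Measure.toSphere_preimage_val volume (hs.preimage (by fun_prop : Measurable
          fun y : EuclideanSpace ℝ (Fin (m + 2)) => inner ℝ L y ^ 2))
        rwa [finrank_euclideanSpace_fin] at h
    _ = ((m + 2 : ℕ) : ℝ≥0∞) * (volume.prod volume) {p : ℝ × EuclideanSpace ℝ (Fin (m + 1)) |
        (p.1, ‖p.2‖) ∈ {q : ℝ × ℝ | (q.1, q.1 ^ 2 + q.2 ^ 2) ∈ T}} := by
        rw [hcone, volume_setOf_inner_normSq_mem hL hT, Measure.volume_eq_prod]
        rfl
    _ = _ := by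
        have hT' : MeasurableSet {q : ℝ × ℝ | (q.1, q.1 ^ 2 + q.2 ^ 2) ∈ T} :=
          hT.preimage (by fun_prop)
        rw [prod_setOf_fst_norm_snd_mem _ _ hT', finrank_euclideanSpace_fin,
          Nat.add_sub_cancel]
        rfl

theorem inner_sq_betaDistributed (n : ℕ) (hn : 2 ≤ n)
    (L : EuclideanSpace ℝ (Fin n)) (hL : ‖L‖ = 1) :
    Measure.map (fun u : EuclideanSpace ℝ (Fin n) => (inner ℝ L u : ℝ) ^ 2)
        (sphereUniform n)
      = _root_.betaMeasure (1/2) (((n:ℝ) - 1)/2) := by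
  obtain ⟨m, rfl⟩ : ∃ m, n = m + 2 := ⟨n - 2, by omega⟩
  have hb : (((m + 2 : ℕ) : ℝ) - 1) / 2 = ((m : ℝ) + 1) / 2 := by push_cast; ring
  have hf : Measurable fun u : EuclideanSpace ℝ (Fin (m + 2)) => inner ℝ L u ^ 2 := by fun_prop
  have := isProbabilityMeasure_sphereUniform (m + 2)
  have := Measure.isProbabilityMeasure_map (μ := sphereUniform (m + 2)) hf.aemeasurable
  have := isProbabilityMeasure_betaMeasure (a := 1 / 2) (b := ((m : ℝ) + 1) / 2)
    (by norm_num) (by positivity)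
  set σ := (volume : Measure (EuclideanSpace ℝ (Fin (m + 2)))).toSphere
  obtain ⟨c, hc⟩ := map_inner_sq_toSphere_eq_smul hL
  rw [hb]
  refine Measure.eq_of_isProbabilityMeasure_of_eq_smul (c := (σ univ)⁻¹ * c) ?_
    (betaMeasure_eq_smul (by norm_num) (by positivity))
  rw [sphereUniform, Measure.map_smul, Measure.map_map hf measurable_subtype_coe]
  exact (congrArg _ hc).trans (smul_smul _ _ _)
end

section
/- Let n ≥ 2, let L ∈ ℝ^n be a unit vector, and let U be uniformly distributed on S^{n-1}. Then for every t with 0 < t < 1, P(|⟨L,U⟩| > √t) ≤ √(2/((n-1)π)) · (1-t)^{(n-1)/2}/√t. -/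
/-!
Normalizing the surface measure by the volume of the unit ball, the probability is
`vol C / vol Bⁿ` for the cone `C = {x ∈ Bⁿ | √t ‖x‖ < |⟪L, x⟫|}` over the cap set. After a
reflection taking `L` to `e₀`, the slice of `C` at height `x₀ = s` is an `(n-1)`-ball of squared
radius `min 1 (s² / t) - s²`. Bounding the radius by `√((1 - t) / t) |s|` for `|s| ≤ √t` and by
`√(1 - s²) ≤ (s / √t) √(1 - s²)` beyond gives `vol C ≤ 2 (1 - t)^((n-1)/2) vol Bⁿ⁻¹ / (n √t)`.
Finally `vol Bⁿ⁻¹ / vol Bⁿ ≤ n / √(2π(n-1))` follows from the log-convexity of `Γ`, in the form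
`Γ(x + 1/2) ≤ √x Γ(x)`.
-/

open MeasureTheory ProbabilityTheory Real Set

open scoped ENNReal Pointwise

theorem Real.Gamma_add_half_le_sqrt_mul_Gamma {x : ℝ} (hx : 0 < x) :
    Gamma (x + 1 / 2) ≤ √x * Gamma x := by
  have hΓ := Gamma_pos_of_pos hx
  have hconv := Gamma_mul_add_mul_le_rpow_Gamma_mul_rpow_Gamma hx (by linarith : 0 < x + 1)
    (by norm_num : (0 : ℝ) < 1 / 2) (by norm_num : (0 : ℝ) < 1 / 2) (by norm_num)
  rw [Gamma_add_one hx.ne', mul_rpow hx.le hΓ.le, ← sqrt_eq_rpow, ← sqrt_eq_rpow] at hconv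
  calc Gamma (x + 1 / 2) = Gamma (1 / 2 * x + 1 / 2 * (x + 1)) := by ring_nf
    _ ≤ √(Gamma x) * (√x * √(Gamma x)) := hconv
    _ = √x * Gamma x := by rw [mul_left_comm, mul_self_sqrt hΓ.le]

theorem volume_unitBall_le_mul_volume_unitBall_succ {m : ℕ} (hm : m ≠ 0) :
    volume (Metric.ball (0 : EuclideanSpace ℝ (Fin m)) 1) ≤
      ENNReal.ofReal ((m + 1) / √(2 * π * m)) *
        volume (Metric.ball (0 : EuclideanSpace ℝ (Fin (m + 1))) 1) := by
  have : NeZero m := ⟨hm⟩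
  simp only [EuclideanSpace.volume_ball, Fintype.card_fin, ENNReal.ofReal_one, one_pow, one_mul]
  rw [← ENNReal.ofReal_mul (by positivity)]
  refine ENNReal.ofReal_le_ofReal ?_
  have hm0 : (0 : ℝ) < m := by positivity
  have hkey := Gamma_add_half_le_sqrt_mul_Gamma (half_pos hm0)
  rw [Nat.cast_succ, show ((m : ℝ) + 1) / 2 + 1 = (m / 2 + 1 / 2) + 1 by ring,
    Gamma_add_one (by positivity), Gamma_add_one (by positivity), pow_succ,
    sqrt_mul' _ hm0.le, sqrt_mul zero_le_two]
  have hs : √(m / 2) = √m / √2 := sqrt_div' _ zero_le_two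
  rw [hs] at hkey
  rw [div_le_iff₀ (by positivity)]
  field_simp
  calc √2 * √m * Gamma ((m + 1) / 2) = √2 * √m * Gamma (m / 2 + 1 / 2) := by ring_nf
    _ ≤ √2 * √m * (√m / √2 * Gamma (m / 2)) := by gcongr
    _ = m * Gamma (m / 2) := by
      field_simp
      rw [sq_sqrt hm0.le]

theorem sphereUniform_apply {n : ℕ} (hn : n ≠ 0) {A : Set (EuclideanSpace ℝ (Fin n))}
    (hA : MeasurableSet A) :
    sphereUniform n A = volume (Ioo (0 : ℝ) 1 • (Metric.sphere 0 1 ∩ A)) /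
      volume (Metric.ball (0 : EuclideanSpace ℝ (Fin n)) 1) := by
  have hdim : (Module.finrank ℝ (EuclideanSpace ℝ (Fin n)) : ℝ≥0∞) ≠ 0 := by simpa using hn
  rw [sphereUniform, Measure.smul_apply, Measure.map_apply measurable_subtype_coe hA,
    Measure.toSphere_apply' _ (measurable_subtype_coe hA), Measure.toSphere_apply_univ,
    Subtype.image_preimage_coe, smul_eq_mul, ENNReal.mul_inv (.inl hdim) (.inl (by simp)),
    mul_mul_mul_comm, ENNReal.inv_mul_cancel hdim (by simp), one_mul, ← ENNReal.div_eq_inv_mul]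

theorem Ioo_smul_sphere_inter_setOf_lt_abs_inner {E : Type*} [NormedAddCommGroup E]
    [InnerProductSpace ℝ E] (L : E) (a : ℝ) :
    Ioo (0 : ℝ) 1 • (Metric.sphere 0 1 ∩ {u | a < |inner ℝ L u|}) =
      {x | ‖x‖ < 1 ∧ a * ‖x‖ < |inner ℝ L x|} := by
  ext x
  constructor
  · rintro ⟨r, ⟨hr0, hr1⟩, u, ⟨hu, hLu⟩, rfl⟩
    rw [mem_sphere_zero_iff_norm] at hu
    simp only [mem_ofPred_eq] at hLu ⊢
    rw [norm_smul, real_inner_smul_right, abs_mul, hu, norm_of_nonneg hr0.le, abs_of_pos hr0]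
    exact ⟨by simpa using hr1, by nlinarith⟩
  · rintro ⟨hx1, hxa⟩
    have hx0 : x ≠ 0 := by rintro rfl; simp at hxa
    have hpos : 0 < ‖x‖ := norm_pos_iff.mpr hx0
    refine ⟨‖x‖, ⟨hpos, hx1⟩, ‖x‖⁻¹ • x, ⟨?_, ?_⟩, smul_inv_smul₀ hpos.ne' x⟩
    · exact mem_sphere_zero_iff_norm.mpr (norm_smul_inv_norm hx0)
    · rw [mem_ofPred_eq, real_inner_smul_right, abs_mul, abs_of_pos (inv_pos.mpr hpos),
        lt_inv_mul_iff₀ hpos]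
      linarith

theorem volume_setOf_norm_inner_eq {E : Type*} [NormedAddCommGroup E] [InnerProductSpace ℝ E]
    [FiniteDimensional ℝ E] [MeasurableSpace E] [BorelSpace E] {L L' : E} (h : ‖L‖ = ‖L'‖)
    (P : ℝ → ℝ → Prop) :
    volume {x | P ‖x‖ (inner ℝ L x)} = volume {x | P ‖x‖ (inner ℝ L' x)} := by
  set R := (ℝ ∙ (L - L'))ᗮ.reflection
  have hRL : R L = L' := Submodule.reflection_sub h
  have hpre : R ⁻¹' {x | P ‖x‖ (inner ℝ L' x)} = {x | P ‖x‖ (inner ℝ L x)} := by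
    ext x
    rw [mem_preimage, mem_ofPred_eq, ← hRL, R.norm_map, R.inner_map_map, mem_ofPred_eq]
  rw [← hpre, ← R.coe_toMeasurableEquiv, R.measurePreserving.measure_preimage_equiv]

theorem volume_setOf_sq_norm_lt (m : ℕ) {f : ℝ → ℝ} (hf : Measurable f) :
    volume {x : EuclideanSpace ℝ (Fin (m + 1)) | ‖x‖ ^ 2 < x 0 ^ 2 + f (x 0)} =
      ∫⁻ s, volume (Metric.ball (0 : EuclideanSpace ℝ (Fin m)) √(f s)) := by
  let φ : EuclideanSpace ℝ (Fin (m + 1)) ≃ᵐ ℝ × EuclideanSpace ℝ (Fin m) :=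
    (MeasurableEquiv.toLp 2 _).symm.trans <| (MeasurableEquiv.piFinSuccAbove (fun _ ↦ ℝ) 0).trans <|
      MeasurableEquiv.prodCongr (MeasurableEquiv.refl ℝ) (MeasurableEquiv.toLp 2 _)
  have hφ : MeasurePreserving φ :=
    (EuclideanSpace.volume_preserving_symm_measurableEquiv_toLp _).trans <|
      (volume_preserving_piFinSuccAbove (fun _ ↦ ℝ) 0).trans <| (MeasurePreserving.id volume).prod
        (EuclideanSpace.volume_preserving_symm_measurableEquiv_toLp _).symm
  set S : Set (ℝ × EuclideanSpace ℝ (Fin m)) := {p | ‖p.2‖ ^ 2 < f p.1}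
  have hS : MeasurableSet S := measurableSet_lt (by fun_prop) (hf.comp measurable_fst)
  have hpre : φ ⁻¹' S = {x : EuclideanSpace ℝ (Fin (m + 1)) | ‖x‖ ^ 2 < x 0 ^ 2 + f (x 0)} := by
    ext x
    simp [S, φ, MeasurableEquiv.prodCongr, EuclideanSpace.norm_sq_eq, Fin.sum_univ_succ, Fin.tail]
  rw [← hpre, hφ.measure_preimage_equiv, Measure.volume_eq_prod, Measure.prod_apply hS]
  congr! with s
  ext y
  simp [S, Real.lt_sqrt]

noncomputable def coneSliceSqRadius (a s : ℝ) : ℝ := min 1 (s ^ 2 / a ^ 2) - s ^ 2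

@[fun_prop]
theorem continuous_coneSliceSqRadius (a : ℝ) : Continuous (coneSliceSqRadius a) := by
  unfold coneSliceSqRadius; fun_prop

theorem coneSliceSqRadius_neg (a s : ℝ) : coneSliceSqRadius a (-s) = coneSliceSqRadius a s := by
  simp [coneSliceSqRadius]

theorem sqrt_coneSliceSqRadius_le_sqrt_one_sub_sq (a s : ℝ) :
    √(coneSliceSqRadius a s) ≤ √(1 - s ^ 2) :=
  sqrt_le_sqrt (by unfold coneSliceSqRadius; linarith [min_le_left 1 (s ^ 2 / a ^ 2)])

theorem sqrt_coneSliceSqRadius_le_mul_abs {a : ℝ} (ha : 0 < a) (s : ℝ) :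
    √(coneSliceSqRadius a s) ≤ √(1 - a ^ 2) / a * |s| := by
  have hle : coneSliceSqRadius a s ≤ (1 - a ^ 2) * (|s| / a) ^ 2 := by
    unfold coneSliceSqRadius
    rw [div_pow, sq_abs]
    have := min_le_right 1 (s ^ 2 / a ^ 2)
    field_simp at this ⊢
    nlinarith
  calc √(coneSliceSqRadius a s) ≤ √((1 - a ^ 2) * (|s| / a) ^ 2) := sqrt_le_sqrt hle
    _ = √(1 - a ^ 2) / a * |s| := by
      rw [sqrt_mul' _ (sq_nonneg _), sqrt_sq (by positivity)]; ring

theorem lt_one_and_mul_lt_abs_iff {a N r : ℝ} (ha : 0 < a) (hN : 0 ≤ N) :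
    N < 1 ∧ a * N < |r| ↔ N ^ 2 < r ^ 2 + coneSliceSqRadius a r := by
  rw [coneSliceSqRadius, add_sub_cancel, lt_min_iff, lt_div_iff₀ (by positivity), ← mul_pow,
    ← sq_abs r, sq_lt_one_iff₀ hN, pow_lt_pow_iff_left₀ (by positivity) (abs_nonneg r) two_ne_zero,
    mul_comm]

theorem integral_mul_sqrt_one_sub_sq_pow {a : ℝ} (ha : -1 ≤ a) (ha' : a ≤ 1) (m : ℕ) :
    ∫ s in a..1, s * √(1 - s ^ 2) ^ m = √(1 - a ^ 2) ^ (m + 2) / (m + 2) := by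
  have hderiv : ∀ s ∈ Ioo a 1,
      HasDerivAt (fun s ↦ -√(1 - s ^ 2) ^ (m + 2) / (m + 2)) (s * √(1 - s ^ 2) ^ m) s := by
    intro s ⟨has, hs1⟩
    have hpos : 0 < 1 - s ^ 2 := by nlinarith
    have hsqrt := ((hasDerivAt_pow 2 s).const_sub 1).sqrt hpos.ne'
    refine (((hsqrt.fun_pow (m + 2)).neg).div_const ((m : ℝ) + 2)).congr_deriv ?_
    have := (sqrt_pos.mpr hpos).ne'
    push_cast
    field_simp
    ring
  rw [intervalIntegral.integral_eq_sub_of_hasDerivAt_of_le ha' (by fun_prop) hderiv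
    ((by fun_prop : Continuous fun s : ℝ ↦ s * √(1 - s ^ 2) ^ m).intervalIntegrable _ _)]
  simp [neg_div]

theorem integral_sqrt_coneSliceSqRadius_pow_le {a : ℝ} (ha0 : 0 < a) (ha1 : a < 1) (m : ℕ) :
    ∫ s in (-1)..1, √(coneSliceSqRadius a s) ^ m ≤ 2 * √(1 - a ^ 2) ^ m / ((m + 1) * a) := by
  set g := fun s ↦ √(coneSliceSqRadius a s) ^ m
  have hint : ∀ b c, IntervalIntegrable g volume b c :=
    (by fun_prop : Continuous g).intervalIntegrable
  have heven : ∫ s in (-1)..1, g s = 2 * ∫ s in 0..1, g s := by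
    have hneg : ∫ s in (-1)..0, g s = ∫ s in 0..1, g s := by
      simpa [g, coneSliceSqRadius_neg] using
        (intervalIntegral.integral_comp_neg (a := 0) (b := 1) g).symm
    rw [← intervalIntegral.integral_add_adjacent_intervals (hint (-1) 0) (hint 0 1), hneg, two_mul]
  have hcone : ∫ s in 0..a, g s ≤ √(1 - a ^ 2) ^ m * a / (m + 1) := by
    calc ∫ s in 0..a, g s ≤ ∫ s in 0..a, (√(1 - a ^ 2) / a) ^ m * s ^ m := by
          refine intervalIntegral.integral_mono_on ha0.le (hint 0 a)
            ((by fun_prop : Continuous _).intervalIntegrable _ _) fun s hs ↦ ?_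
          have := sqrt_coneSliceSqRadius_le_mul_abs ha0 s
          rw [abs_of_nonneg hs.1] at this
          rw [← mul_pow]
          exact pow_le_pow_left₀ (sqrt_nonneg _) this m
      _ = √(1 - a ^ 2) ^ m * a / (m + 1) := by
        rw [intervalIntegral.integral_const_mul, integral_pow, zero_pow m.succ_ne_zero, sub_zero,
          pow_succ, div_pow]
        field_simp
        ring
  have hcap : ∫ s in a..1, g s ≤ √(1 - a ^ 2) ^ (m + 2) / ((m + 2) * a) := by
    calc ∫ s in a..1, g s ≤ ∫ s in a..1, s * √(1 - s ^ 2) ^ m / a := by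
          refine intervalIntegral.integral_mono_on ha1.le (hint a 1)
            ((by fun_prop : Continuous _).intervalIntegrable _ _) fun s hs ↦ ?_
          rw [le_div_iff₀ ha0]
          have := pow_le_pow_left₀ (sqrt_nonneg _) (sqrt_coneSliceSqRadius_le_sqrt_one_sub_sq a s) m
          nlinarith [hs.1, pow_nonneg (sqrt_nonneg (1 - s ^ 2)) m]
      _ = √(1 - a ^ 2) ^ (m + 2) / ((m + 2) * a) := by
        rw [intervalIntegral.integral_div, integral_mul_sqrt_one_sub_sq_pow (by linarith) ha1.le,
          div_div]
  have h1a : 0 ≤ 1 - a ^ 2 := by nlinarith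
  have hsq : √(1 - a ^ 2) ^ (m + 2) = √(1 - a ^ 2) ^ m * (1 - a ^ 2) := by
    rw [pow_add, sq_sqrt h1a]
  have hsum : a / (m + 1) + (1 - a ^ 2) / ((m + 2) * a) ≤ 1 / ((m + 1) * a) := by
    calc a / (m + 1) + (1 - a ^ 2) / ((m + 2) * a)
        ≤ a / (m + 1) + (1 - a ^ 2) / ((m + 1) * a) := by gcongr; linarith
      _ = 1 / ((m + 1) * a) := by field_simp; ring
  rw [heven, ← intervalIntegral.integral_add_adjacent_intervals (hint 0 a) (hint a 1)]
  calc 2 * ((∫ s in 0..a, g s) + ∫ s in a..1, g s)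
      ≤ 2 * (√(1 - a ^ 2) ^ m * a / (m + 1) + √(1 - a ^ 2) ^ m * (1 - a ^ 2) / ((m + 2) * a)) := by
        rw [← hsq]; gcongr
    _ = 2 * √(1 - a ^ 2) ^ m * (a / (m + 1) + (1 - a ^ 2) / ((m + 2) * a)) := by ring
    _ ≤ 2 * √(1 - a ^ 2) ^ m * (1 / ((m + 1) * a)) := by gcongr
    _ = 2 * √(1 - a ^ 2) ^ m / ((m + 1) * a) := by ring

theorem lintegral_ofReal_sqrt_coneSliceSqRadius_pow {a : ℝ} {m : ℕ} (hm : m ≠ 0) :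
    ∫⁻ s, ENNReal.ofReal (√(coneSliceSqRadius a s) ^ m) =
      ENNReal.ofReal (∫ s in (-1)..1, √(coneSliceSqRadius a s) ^ m) := by
  have hg : Continuous fun s ↦ √(coneSliceSqRadius a s) ^ m := by fun_prop
  have hsupp : Function.support (fun s ↦ √(coneSliceSqRadius a s) ^ m) ⊆ Ioc (-1) 1 := by
    intro s hs
    by_contra hout
    have : 1 ≤ s ^ 2 := by
      rw [mem_Ioc, not_and_or, not_lt, not_le] at hout
      rcases hout with h | h <;> nlinarith
    have hzero : √(coneSliceSqRadius a s) = 0 :=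
      le_antisymm ((sqrt_coneSliceSqRadius_le_sqrt_one_sub_sq a s).trans_eq
        (sqrt_eq_zero_of_nonpos (by linarith))) (sqrt_nonneg _)
    exact hs (by simp [hzero, hm])
  rw [intervalIntegral.integral_eq_integral_of_support_subset hsupp,
    ofReal_integral_eq_lintegral_ofReal _ (.of_forall fun s ↦ by positivity)]
  exact (integrableOn_iff_integrable_of_support_subset hsupp).mp
    (hg.integrableOn_Icc.mono_set Ioc_subset_Icc_self)

theorem volume_cone_inter_ball_le {a : ℝ} (ha0 : 0 < a) (ha1 : a < 1) {m : ℕ} (hm : m ≠ 0) :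
    volume {x : EuclideanSpace ℝ (Fin (m + 1)) | ‖x‖ < 1 ∧ a * ‖x‖ < |x 0|} ≤
      ENNReal.ofReal (2 * √(1 - a ^ 2) ^ m / ((m + 1) * a)) *
        volume (Metric.ball (0 : EuclideanSpace ℝ (Fin m)) 1) := by
  have : Nontrivial (EuclideanSpace ℝ (Fin m)) := by
    have : NeZero m := ⟨hm⟩
    infer_instance
  have hset : {x : EuclideanSpace ℝ (Fin (m + 1)) | ‖x‖ < 1 ∧ a * ‖x‖ < |x 0|} =
      {x | ‖x‖ ^ 2 < x 0 ^ 2 + coneSliceSqRadius a (x 0)} := by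
    ext x
    exact lt_one_and_mul_lt_abs_iff ha0 (norm_nonneg x)
  simp_rw [hset, volume_setOf_sq_norm_lt m (continuous_coneSliceSqRadius a).measurable,
    Measure.addHaar_ball _ _ (sqrt_nonneg _), finrank_euclideanSpace_fin]
  rw [lintegral_mul_const _ (by fun_prop), lintegral_ofReal_sqrt_coneSliceSqRadius_pow hm]
  gcongr
  exact integral_sqrt_coneSliceSqRadius_pow_le ha0 ha1 m

theorem single_inner_tail_bound (n : ℕ) (hn : 2 ≤ n)
    (L : EuclideanSpace ℝ (Fin n)) (hL : ‖L‖ = 1) (t : ℝ) (ht0 : 0 < t) (ht1 : t < 1) :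
    ((sphereUniform n) {u | Real.sqrt t < |(inner ℝ L u : ℝ)|}).toReal
      ≤ Real.sqrt (2 / (((n:ℝ) - 1) * Real.pi)) * (1 - t) ^ (((n:ℝ) - 1)/2) / Real.sqrt t := by
  obtain ⟨m, rfl⟩ : ∃ m, n = m + 1 := ⟨n - 1, by omega⟩
  have hm : m ≠ 0 := by omega
  have ha0 : 0 < √t := sqrt_pos.mpr ht0
  have ha1 : √t < 1 := (sqrt_lt' one_pos).mpr (by simpa using ht1)
  have hrot := volume_setOf_norm_inner_eq (L := L) (L' := EuclideanSpace.single 0 (1 : ℝ))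
    (by simp [hL]) fun N r ↦ N < 1 ∧ √t * N < |r|
  simp only [EuclideanSpace.inner_single_left, map_one, one_mul] at hrot
  have hP : sphereUniform (m + 1) {u | √t < |inner ℝ L u|} ≤
      ENNReal.ofReal (2 * √(1 - √t ^ 2) ^ m / ((m + 1) * √t) * ((m + 1) / √(2 * π * m))) := by
    rw [sphereUniform_apply m.succ_ne_zero (measurableSet_lt measurable_const (by fun_prop)),
      Ioo_smul_sphere_inter_setOf_lt_abs_inner, hrot, ENNReal.ofReal_mul (by positivity)]
    refine ENNReal.div_le_of_le_mul ?_
    calc _ ≤ _ := volume_cone_inter_ball_le ha0 ha1 hm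
      _ ≤ _ := by gcongr; exact volume_unitBall_le_mul_volume_unitBall_succ hm
      _ = _ := (mul_assoc _ _ _).symm
  refine ENNReal.toReal_le_of_le_ofReal (by positivity) (hP.trans_eq ?_)
  congr 1
  have hm0 : (0 : ℝ) < m := by positivity
  rw [Nat.cast_succ, add_sub_cancel_right, sq_sqrt ht0.le, rpow_div_two_eq_sqrt _ (by linarith),
    rpow_natCast, sqrt_div' _ (by positivity), sqrt_mul' _ pi_pos.le, sqrt_mul' _ hm0.le,
    sqrt_mul zero_le_two]
  field_simp
  rw [sq_sqrt zero_le_two, mul_comm]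
end

section
/- (SABER, asymptotic form) Let, for each pair (p,n) with n ≥ 2, L_1,…,L_p be arbitrary unit vectors in ℝ^n and U uniform on S^{n-1}, and let M_{p,n} = max_{1≤j≤p} |⟨L_j,U⟩|. Then for every δ > 0, sup_{n ≥ 2} P( M_{p,n} > √((1+δ)(1 - p^{-2/(n-1)})) ) → 0 as p → ∞. -/
open MeasureTheory ProbabilityTheory Real Set

/-!
The probability of a cap `{⟪v, U⟫ > τ}` is the volume of the cone over it divided by that of the
unit ball. If `2τ² ≤ 1` the cone lies in the ball of radius `w = √(1 - τ²)` about `τ v`; otherwise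
it is covered by about `n / w` balls of radius `(1 + 1/n) w` centred on the segment `[0, v]`.
At the SABER threshold, `1 - x ≤ e^{-x}` and `log t ≤ t - 1` give `p w^{n-1} ≤ p^{-δ}`, and
`τ² > 1/2` forces `n = O(log p)`. A union bound over the `2p` caps `{±⟪L j, U⟫ > τ}` therefore
gives `O(log p · p^{-δ})`, uniformly in `n`.
-/

open Metric Finset Filter Topology
open scoped ENNReal Pointwise

theorem sphereUniform_le_of_cone_subset_closedBalls {n : ℕ} (hn : n ≠ 0)
    {S : Set (EuclideanSpace ℝ (Fin n))} (hS : MeasurableSet S) {ι : Type*} (s : Finset ι)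
    (c : ι → EuclideanSpace ℝ (Fin n)) {ρ : ℝ} (hρ : 0 ≤ ρ)
    (hcover : ∀ u ∈ S, ‖u‖ = 1 → ∀ r ∈ Ioo (0 : ℝ) 1, ∃ i ∈ s, r • u ∈ closedBall (c i) ρ) :
    sphereUniform n S ≤ #s * ENNReal.ofReal (ρ ^ n) := by
  set B := volume (ball (0 : EuclideanSpace ℝ (Fin n)) 1)
  have hcone : Ioo (0 : ℝ) 1 • (Subtype.val '' (Subtype.val ⁻¹' S :
      Set (sphere (0 : EuclideanSpace ℝ (Fin n)) 1))) ⊆ ⋃ i ∈ s, closedBall (c i) ρ := by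
    rintro _ ⟨r, hr, _, ⟨⟨u, hu⟩, huS, rfl⟩, rfl⟩
    obtain ⟨i, hi, hmem⟩ := hcover u huS (mem_sphere_zero_iff_norm.1 hu) r hr
    exact mem_biUnion hi hmem
  have hballs : volume (⋃ i ∈ s, closedBall (c i) ρ) ≤ #s * (ENNReal.ofReal (ρ ^ n) * B) := by
    refine (measure_biUnion_finset_le _ _).trans_eq ?_
    simp_rw [Measure.addHaar_closedBall _ _ hρ, finrank_euclideanSpace_fin, sum_const,
      nsmul_eq_mul, B]
  have hB : (n : ℝ≥0∞) * B ≠ 0 :=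
    mul_ne_zero (Nat.cast_ne_zero.2 hn) (measure_ball_pos volume 0 one_pos).ne'
  have hB' : (n : ℝ≥0∞) * B ≠ ∞ :=
    ENNReal.mul_ne_top (ENNReal.natCast_ne_top _) measure_ball_lt_top.ne
  rw [sphereUniform, Measure.smul_apply, Measure.map_apply measurable_subtype_coe hS,
    Measure.toSphere_apply' _ (measurable_subtype_coe hS), Measure.toSphere_apply_univ,
    finrank_euclideanSpace_fin, smul_eq_mul, ENNReal.inv_mul_le_iff hB hB']
  calc (n : ℝ≥0∞) * volume _ ≤ n * (#s * (ENNReal.ofReal (ρ ^ n) * B)) := by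
        gcongr; exact (measure_mono hcone).trans hballs
    _ = n * B * (#s * ENNReal.ofReal (ρ ^ n)) := by ring

section ConeGeometry

variable {F : Type*} [NormedAddCommGroup F] [InnerProductSpace ℝ F] {u v : F} {r τ : ℝ}

theorem norm_sub_smul_sq_of_norm_eq_one (hv : ‖v‖ = 1) (x : F) (a : ℝ) :
    ‖x - a • v‖ ^ 2 = ‖x‖ ^ 2 - 2 * a * inner ℝ v x + a ^ 2 := by
  rw [norm_sub_sq_real, norm_smul, hv, real_inner_smul_right, real_inner_comm, norm_eq_abs,
    mul_one, sq_abs]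
  ring

theorem norm_smul_sub_smul_sq (hu : ‖u‖ = 1) (hv : ‖v‖ = 1) (hr₀ : 0 ≤ r) (a : ℝ) :
    ‖r • u - a • v‖ ^ 2 = r ^ 2 - 2 * a * r * inner ℝ v u + a ^ 2 := by
  rw [norm_sub_smul_sq_of_norm_eq_one hv, norm_smul, hu, real_inner_smul_right, norm_eq_abs,
    abs_of_nonneg hr₀]
  ring

theorem norm_smul_sub_smul_le_sqrt (hu : ‖u‖ = 1) (hv : ‖v‖ = 1) (hr₀ : 0 ≤ r) (hr₁ : r ≤ 1)
    (hτ : 0 ≤ τ) (huv : τ ≤ inner ℝ v u) (hτ₂ : 2 * τ ^ 2 ≤ 1) :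
    ‖r • u - τ • v‖ ≤ √(1 - τ ^ 2) := by
  rw [Real.le_sqrt (norm_nonneg _) (by nlinarith), norm_smul_sub_smul_sq hu hv hr₀]
  -- `r² - 2τ²r + τ² ≤ 1 - τ²` is `(r - 1)(r + 1 - 2τ²) ≤ 0`
  nlinarith [mul_le_mul_of_nonneg_left huv (mul_nonneg hτ hr₀)]

theorem norm_smul_sub_smul_sq_le (hu : ‖u‖ = 1) (hv : ‖v‖ = 1) (hr₀ : 0 ≤ r) (hr₁ : r ≤ 1)
    (hτ : 0 ≤ τ) (huv : τ ≤ inner ℝ v u) (a : ℝ) :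
    ‖r • u - a • v‖ ^ 2 ≤ 1 - τ ^ 2 + (r * inner ℝ v u - a) ^ 2 := by
  have h₁ : inner ℝ v u ≤ 1 := by simpa [hu, hv] using real_inner_le_norm v u
  have ht : τ ^ 2 ≤ inner ℝ v u ^ 2 := pow_le_pow_left₀ hτ huv 2
  have ht₁ : inner ℝ v u ^ 2 ≤ 1 := pow_le_one₀ (hτ.trans huv) h₁
  rw [norm_smul_sub_smul_sq hu hv hr₀]
  nlinarith [mul_le_mul_of_nonneg_right (pow_le_one₀ hr₀ hr₁ : r ^ 2 ≤ 1) (sub_nonneg.2 ht₁)]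

end ConeGeometry

theorem exists_mem_range_abs_sub_natCast_mul_le {s h : ℝ} (hs₀ : 0 ≤ s) (hs₁ : s ≤ 1)
    (hh : 0 < h) : ∃ i ∈ range (⌊h⁻¹⌋₊ + 1), |s - i * h| ≤ h := by
  refine ⟨⌊s / h⌋₊, mem_range.2 (Nat.lt_succ_of_le (Nat.floor_le_floor ?_)), ?_⟩
  · rw [div_eq_mul_inv]; exact mul_le_of_le_one_left (inv_nonneg.2 hh.le) hs₁
  have h₁ := Nat.floor_le (div_nonneg hs₀ hh.le)
  have h₂ := Nat.lt_floor_add_one (s / h)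
  rw [le_div_iff₀ hh] at h₁
  rw [div_lt_iff₀ hh] at h₂
  rw [abs_le]; constructor <;> nlinarith

theorem floor_add_one_mul_pow_le {w : ℝ} (hw : 0 < w) (hw₁ : w ≤ 1) (k : ℕ) :
    ((⌊(w / (k + 1))⁻¹⌋₊ + 1 : ℕ) : ℝ) * (w + w / (k + 1)) ^ (k + 1) ≤
      2 * exp 1 * (k + 1) * w ^ k := by
  have hinv : 1 ≤ (w / (k + 1))⁻¹ := by
    rw [inv_div, one_le_div₀ hw]; linarith [(k.cast_nonneg : (0 : ℝ) ≤ k)]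
  have hK : ((⌊(w / (k + 1))⁻¹⌋₊ + 1 : ℕ) : ℝ) ≤ 2 * (k + 1) / w := by
    have := Nat.floor_le (zero_le_one.trans hinv)
    calc ((⌊(w / (k + 1))⁻¹⌋₊ + 1 : ℕ) : ℝ) ≤ (w / (k + 1))⁻¹ + (w / (k + 1))⁻¹ := by
          push_cast; linarith
      _ = 2 * (k + 1) / w := by rw [inv_div]; ring
  have hpow : (w + w / (k + 1)) ^ (k + 1) ≤ w ^ (k + 1) * exp 1 := by
    rw [show w + w / (k + 1) = w * (1 + ((k + 1 : ℕ) : ℝ)⁻¹) by push_cast; field_simp, mul_pow]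
    exact mul_le_mul_of_nonneg_left Real.one_add_inv_pow_le_exp (by positivity)
  calc ((⌊(w / (k + 1))⁻¹⌋₊ + 1 : ℕ) : ℝ) * (w + w / (k + 1)) ^ (k + 1)
      ≤ 2 * (k + 1) / w * (w ^ (k + 1) * exp 1) := by gcongr
    _ = 2 * exp 1 * (k + 1) * w ^ k := by field_simp; ring

theorem measurableSet_lt_inner {n : ℕ} (v : EuclideanSpace ℝ (Fin n)) (τ : ℝ) :
    MeasurableSet {u : EuclideanSpace ℝ (Fin n) | τ < inner ℝ v u} :=
  (isOpen_lt continuous_const (continuous_const.inner continuous_id)).measurableSet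

theorem sphereUniform_cap_le_of_two_mul_sq_le {n : ℕ} (hn : n ≠ 0)
    {v : EuclideanSpace ℝ (Fin n)} (hv : ‖v‖ = 1) {τ : ℝ} (hτ : 0 ≤ τ) (hτ₂ : 2 * τ ^ 2 ≤ 1) :
    sphereUniform n {u | τ < inner ℝ v u} ≤ ENNReal.ofReal (√(1 - τ ^ 2) ^ n) := by
  have h := sphereUniform_le_of_cone_subset_closedBalls hn (measurableSet_lt_inner v τ)
    (univ : Finset Unit) (fun _ => τ • v) (Real.sqrt_nonneg _)
    fun u huv hu r hr => ⟨(), mem_univ _, by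
      rw [mem_closedBall, dist_eq_norm]
      exact norm_smul_sub_smul_le_sqrt hu hv hr.1.le hr.2.le hτ huv.le hτ₂⟩
  simpa using h

theorem sphereUniform_cap_le {k : ℕ} {v : EuclideanSpace ℝ (Fin (k + 1))} (hv : ‖v‖ = 1)
    {τ : ℝ} (hτ : 0 ≤ τ) :
    sphereUniform (k + 1) {u | τ < inner ℝ v u} ≤
      ENNReal.ofReal (2 * exp 1 * (k + 1) * √(1 - τ ^ 2) ^ k) := by
  rcases le_or_gt 1 τ with hτ₁ | hτ₁
  · refine (sphereUniform_le_of_cone_subset_closedBalls k.succ_ne_zero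
      (measurableSet_lt_inner v τ) (∅ : Finset ℕ) (fun _ => 0) le_rfl
      fun u huv hu _ _ => absurd (huv.trans_le ?_) hτ₁.not_gt).trans (by simp)
    simpa [hu, hv] using real_inner_le_norm v u
  set w := √(1 - τ ^ 2)
  have hw : 0 < w := Real.sqrt_pos.2 (by nlinarith)
  set h := w / (k + 1)
  have hh : 0 < h := by positivity
  refine (sphereUniform_le_of_cone_subset_closedBalls k.succ_ne_zero
    (measurableSet_lt_inner v τ) (range (⌊h⁻¹⌋₊ + 1)) (fun i => ((i : ℝ) * h) • v)
    (ρ := w + h) (by positivity) fun u huv hu r hr => ?_).trans ?_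
  · have hs₀ : 0 ≤ r * inner ℝ v u := mul_nonneg hr.1.le (hτ.trans huv.le)
    have hs₁ : r * inner ℝ v u ≤ 1 := by
      have : inner ℝ v u ≤ 1 := by simpa [hu, hv] using real_inner_le_norm v u
      nlinarith [hr.1, hr.2]
    obtain ⟨i, hi, hclose⟩ := exists_mem_range_abs_sub_natCast_mul_le hs₀ hs₁ hh
    refine ⟨i, hi, ?_⟩
    rw [mem_closedBall, dist_eq_norm, ← pow_le_pow_iff_left₀ (norm_nonneg _) (by positivity)
      two_ne_zero]
    have h₁ := norm_smul_sub_smul_sq_le hu hv hr.1.le hr.2.le hτ huv.le ((i : ℝ) * h)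
    have h₂ : (r * inner ℝ v u - i * h) ^ 2 ≤ h ^ 2 :=
      sq_le_sq' (abs_le.1 hclose).1 (abs_le.1 hclose).2
    have h₃ : w ^ 2 = 1 - τ ^ 2 := Real.sq_sqrt (by nlinarith)
    nlinarith
  · rw [card_range, ← ENNReal.ofReal_natCast, ← ENNReal.ofReal_mul (by positivity)]
    exact ENNReal.ofReal_le_ofReal
      (floor_add_one_mul_pow_le hw (Real.sqrt_le_one.2 (by nlinarith)) k)

theorem mul_sqrt_one_sub_pow_le_rpow_neg {δ p : ℝ} {k : ℕ} (hδ : 0 ≤ δ) (hp : 1 ≤ p)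
    (hk : k ≠ 0) : p * √(1 - (1 + δ) * (1 - p ^ (-2 / k : ℝ))) ^ k ≤ p ^ (-δ) := by
  have hp₀ : 0 < p := by linarith
  have hk₀ : (0 : ℝ) < k := by positivity
  set y := p ^ (-1 / k : ℝ)
  have hy : 0 < y := rpow_pos_of_pos hp₀ _
  have hy₂ : p ^ (-2 / k : ℝ) = y ^ 2 := by
    rw [← rpow_natCast, ← rpow_mul hp₀.le]; congr 1; push_cast; ring
  have hyk : y ^ k = p⁻¹ := by
    rw [← rpow_natCast, ← rpow_mul hp₀.le, div_mul_cancel₀ _ hk₀.ne', rpow_neg_one]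
  have hlog : 2 * log p ≤ k * (1 / y ^ 2 - 1) := by
    have h := log_le_sub_one_of_pos (show 0 < 1 / y ^ 2 by positivity)
    rw [one_div, ← hy₂, log_inv, log_rpow hp₀] at h
    rw [one_div, ← hy₂]
    calc 2 * log p = k * -(-2 / k * log p) := by field_simp
      _ ≤ k * ((p ^ (-2 / k : ℝ))⁻¹ - 1) := by gcongr
  -- `1 - (1 + δ)(1 - y²) = y²(1 - x) ≤ y² e^{-x}`, and `k x ≥ 2δ log p` by `hlog`
  set x := δ * (1 / y ^ 2 - 1)
  have hsqrt : √(1 - (1 + δ) * (1 - y ^ 2)) ≤ y * exp (-x / 2) := by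
    refine Real.sqrt_le_iff.2 ⟨by positivity, ?_⟩
    have h₁ : 1 - (1 + δ) * (1 - y ^ 2) = y ^ 2 * (1 - x) := by simp only [x]; field_simp; ring
    rw [h₁, mul_pow, ← exp_nat_mul]
    push_cast
    have := one_sub_le_exp_neg x
    rw [show (2 : ℝ) * (-x / 2) = -x by ring]
    gcongr
  calc p * √(1 - (1 + δ) * (1 - p ^ (-2 / k : ℝ))) ^ k ≤ p * (y * exp (-x / 2)) ^ k := by
        rw [hy₂]; gcongr
    _ = exp (-(k * x / 2)) := by
        rw [mul_pow, hyk, ← exp_nat_mul]; field_simp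
    _ ≤ exp (-(δ * log p)) := exp_le_exp.2 (by simp only [x]; nlinarith)
    _ = p ^ (-δ) := by rw [rpow_def_of_pos hp₀]; ring_nf

theorem log_two_add_two_mul_div_pos {δ : ℝ} (hδ : 0 < δ) :
    0 < log ((2 + 2 * δ) / (1 + 2 * δ)) :=
  log_pos ((one_lt_div (by positivity)).2 (by linarith))

theorem natCast_mul_log_lt_two_mul_log {δ p : ℝ} {k : ℕ} (hδ : 0 < δ) (hp : 0 < p)
    (hk : k ≠ 0) (hT : 1 / 2 < (1 + δ) * (1 - p ^ (-2 / k : ℝ))) :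
    k * log ((2 + 2 * δ) / (1 + 2 * δ)) < 2 * log p := by
  have hq : p ^ (-2 / k : ℝ) < (1 + 2 * δ) / (2 + 2 * δ) := by
    rw [lt_div_iff₀ (by positivity)]; linarith
  have h := log_lt_log (rpow_pos_of_pos hp _) hq
  rw [log_rpow hp, ← inv_div (2 + 2 * δ), log_inv, neg_div, neg_mul] at h
  calc k * log ((2 + 2 * δ) / (1 + 2 * δ)) < k * (2 / k * log p) := by gcongr; linarith
    _ = 2 * log p := by field_simp

theorem measure_lt_iSup_abs_inner_le {F : Type*} [NormedAddCommGroup F] [InnerProductSpace ℝ F]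
    [MeasurableSpace F] (μ : Measure F) {ι : Type*} [Fintype ι] [Nonempty ι] {L : ι → F}
    (hL : ∀ j, ‖L j‖ = 1) (τ : ℝ) {b : ℝ≥0∞}
    (hb : ∀ v : F, ‖v‖ = 1 → μ {u | τ < inner ℝ v u} ≤ b) :
    μ {u | τ < ⨆ j, |inner ℝ (L j) u|} ≤ 2 * Fintype.card ι * b := by
  have hsub : {u | τ < ⨆ j, |inner ℝ (L j) u|} ⊆
      ⋃ j, ({u | τ < inner ℝ (L j) u} ∪ {u | τ < inner ℝ (-L j) u}) := by
    intro u (hu : τ < ⨆ j, |inner ℝ (L j) u|)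
    obtain ⟨j, hj⟩ := exists_lt_of_lt_ciSup hu
    simpa only [mem_iUnion, mem_union, mem_ofPred_eq, inner_neg_left] using ⟨j, lt_abs.1 hj⟩
  calc μ {u | τ < ⨆ j, |inner ℝ (L j) u|}
      ≤ ∑ j, (μ {u | τ < inner ℝ (L j) u} + μ {u | τ < inner ℝ (-L j) u}) :=
        (measure_mono hsub).trans <| (measure_iUnion_fintype_le _ _).trans <|
          sum_le_sum fun j _ => measure_union_le _ _
    _ ≤ ∑ _j : ι, (b + b) :=
        sum_le_sum fun j _ => add_le_add (hb _ (hL j)) (hb _ (by rw [norm_neg, hL j]))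
    _ = 2 * Fintype.card ι * b := by rw [sum_const, card_univ, nsmul_eq_mul]; ring

/-- `2 e (k + 1)` is the covering constant of `sphereUniform_cap_le`, and
`k < 2 log p / log ((2 + 2δ) / (1 + 2δ))` once the SABER threshold exceeds `1 / √2`. -/
noncomputable def saberRate (δ p : ℝ) : ℝ :=
  2 * exp 1 * (2 * log p / log ((2 + 2 * δ) / (1 + 2 * δ)) + 1) * p ^ (-δ)

theorem tendsto_saberRate {δ : ℝ} (hδ : 0 < δ) :
    Tendsto (fun p : ℕ => saberRate δ p) atTop (𝓝 0) := by
  have hlog : Tendsto (fun x : ℝ => log x * x ^ (-δ)) atTop (𝓝 0) := by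
    refine ((isLittleO_log_rpow_atTop hδ).tendsto_div_nhds_zero).congr' ?_
    filter_upwards [eventually_gt_atTop 0] with x hx
    rw [rpow_neg hx.le, div_eq_mul_inv]
  have h := ((hlog.const_mul (2 / log ((2 + 2 * δ) / (1 + 2 * δ)))).add
    (tendsto_rpow_neg_atTop hδ)).const_mul (2 * exp 1)
  rw [mul_zero, add_zero, mul_zero] at h
  refine (h.comp tendsto_natCast_atTop_atTop).congr fun p => ?_
  simp only [Function.comp, saberRate]
  ring

theorem rpow_neg_le_saberRate {δ p : ℝ} (hδ : 0 < δ) (hp : 1 ≤ p) : p ^ (-δ) ≤ saberRate δ p := by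
  have h : 0 ≤ 2 * log p / log ((2 + 2 * δ) / (1 + 2 * δ)) :=
    div_nonneg (mul_nonneg zero_le_two (log_nonneg hp)) (log_two_add_two_mul_div_pos hδ).le
  refine le_mul_of_one_le_left (by positivity) ?_
  nlinarith [one_le_exp zero_le_one]

theorem sphereUniform_saberCap_le {δ p : ℝ} (hδ : 0 < δ) (hp : 1 ≤ p) {k : ℕ} (hk : k ≠ 0)
    {v : EuclideanSpace ℝ (Fin (k + 1))} (hv : ‖v‖ = 1) :
    sphereUniform (k + 1) {u | √((1 + δ) * (1 - p ^ (-2 / k : ℝ))) < inner ℝ v u} ≤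
      ENNReal.ofReal (saberRate δ p / p) := by
  set T := (1 + δ) * (1 - p ^ (-2 / k : ℝ))
  have hT : 0 ≤ T := mul_nonneg (by linarith) (sub_nonneg.2
    (rpow_le_one_of_one_le_of_nonpos hp (div_nonpos_of_nonpos_of_nonneg (by norm_num)
      k.cast_nonneg)))
  have hτ : √T ^ 2 = T := sq_sqrt hT
  have hp₀ : 0 < p := by linarith
  have hkey : √(1 - T) ^ k ≤ p ^ (-δ) / p := by
    rw [le_div_iff₀ hp₀, mul_comm]; exact mul_sqrt_one_sub_pow_le_rpow_neg hδ.le hp hk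
  rcases le_or_gt T (1 / 2) with hsmall | hlarge
  · refine (sphereUniform_cap_le_of_two_mul_sq_le k.succ_ne_zero hv (sqrt_nonneg _)
      (by rw [hτ]; linarith)).trans (ENNReal.ofReal_le_ofReal ?_)
    rw [hτ]
    calc √(1 - T) ^ (k + 1) ≤ √(1 - T) ^ k :=
          pow_le_pow_of_le_one (sqrt_nonneg _) (sqrt_le_one.2 (by linarith)) k.le_succ
      _ ≤ p ^ (-δ) / p := hkey
      _ ≤ saberRate δ p / p := by gcongr; exact rpow_neg_le_saberRate hδ hp
  · refine (sphereUniform_cap_le hv (sqrt_nonneg _)).trans (ENNReal.ofReal_le_ofReal ?_)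
    have hdim : (k : ℝ) ≤ 2 * log p / log ((2 + 2 * δ) / (1 + 2 * δ)) :=
      (le_div_iff₀ (log_two_add_two_mul_div_pos hδ)).2 (natCast_mul_log_lt_two_mul_log hδ hp₀ hk hlarge).le
    rw [hτ]
    calc 2 * exp 1 * (k + 1) * √(1 - T) ^ k
        ≤ 2 * exp 1 * (2 * log p / log ((2 + 2 * δ) / (1 + 2 * δ)) + 1) * (p ^ (-δ) / p) := by
          gcongr
          exact mul_nonneg (by positivity) (by linarith [(k.cast_nonneg : (0 : ℝ) ≤ k)])
      _ = saberRate δ p / p := by rw [saberRate]; ring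

theorem sphereUniform_saberEvent_toReal_le {δ : ℝ} (hδ : 0 < δ) {p k : ℕ} (hp : p ≠ 0)
    (hk : k ≠ 0) {L : Fin p → EuclideanSpace ℝ (Fin (k + 1))} (hL : ∀ j, ‖L j‖ = 1) :
    (sphereUniform (k + 1) {u | √((1 + δ) * (1 - (p : ℝ) ^ (-2 / k : ℝ))) <
      ⨆ j, |inner ℝ (L j) u|}).toReal ≤ 2 * saberRate δ p := by
  have : Nonempty (Fin p) := Fin.pos_iff_nonempty.1 (Nat.pos_of_ne_zero hp)
  have hp₁ : (1 : ℝ) ≤ p := by exact_mod_cast Nat.one_le_iff_ne_zero.2 hp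
  have h := measure_lt_iSup_abs_inner_le (sphereUniform (k + 1)) hL _
    fun v hv => sphereUniform_saberCap_le hδ hp₁ hk hv
  refine ENNReal.toReal_le_of_le_ofReal
    (mul_nonneg zero_le_two ((rpow_nonneg (by linarith) _).trans (rpow_neg_le_saberRate hδ hp₁)))
    (h.trans_eq ?_)
  rw [Fintype.card_fin, ← ENNReal.ofReal_natCast, ← ENNReal.ofReal_ofNat 2,
    ← ENNReal.ofReal_mul zero_le_two, ← ENNReal.ofReal_mul (by positivity)]
  congr 1
  field_simp

theorem saber_asymptotic (δ : ℝ) (hδ : 0 < δ) :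
    ∀ ε > 0, ∃ P : ℕ, ∀ p : ℕ, P ≤ p → ∀ n : ℕ, 2 ≤ n →
      ∀ L : Fin p → EuclideanSpace ℝ (Fin n), (∀ j, ‖L j‖ = 1) →
        ((sphereUniform n)
            {u | Real.sqrt ((1 + δ) * (1 - (p:ℝ) ^ (-2/((n:ℝ)-1)))) <
                  ⨆ j, |(inner ℝ (L j) u : ℝ)|}).toReal < ε := by
  intro ε hε
  obtain ⟨P, hP⟩ :=
    eventually_atTop.1 ((tendsto_saberRate hδ).eventually (gt_mem_nhds (half_pos hε)))
  refine ⟨max P 1, fun p hp n hn L hL => ?_⟩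
  obtain ⟨k, rfl⟩ : ∃ k, n = k + 1 := ⟨n - 1, by omega⟩
  rw [show ((k + 1 : ℕ) : ℝ) - 1 = k by push_cast; ring]
  calc _ ≤ 2 * saberRate δ p :=
        sphereUniform_saberEvent_toReal_le hδ (by omega) (by omega) hL
    _ < ε := by linarith [hP p (le_of_max_le_left hp)]
end
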